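/- arXiv:2009.08315 — 2 statements merged into one kernel-verified Lean document; each statement's English description precedes it below -/
import Mathlib

section
/- Fix an even m ≥ 2 and let G = ℤ_m^n with degree d = n if m = 2 and d = 2n if m > 2. There is a constant c > 0 (depending only on m) such that for all n and all g ∈ ℕ there exists a family 𝒱 = 𝒱(g) of subsets of V(G) with |𝒱| ≤ 2^{c·(g·(log d)/d + d)} such that for every G²-connected set X ⊆ V(G) with |N(X)| = g, the family 𝒱 contains a set which covers X. -/
open Finset Classical

noncomputable section

/-- The discrete torus `ℤ_m^n`: vertex set `{0,…,m-1}^n`, with `x ~ y` iff they differ by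
`±1 (mod m)` in exactly one coordinate. -/
def torus (m n : ℕ) : SimpleGraph (Fin n → ZMod m) :=
  SimpleGraph.fromRel (fun x y => ∃ i, x i = y i + 1 ∧ ∀ j, j ≠ i → x j = y j)

/-- The neighbourhood `N(X)` of a set of vertices: all vertices with a neighbour in `X`. -/
def nbhd {V : Type*} [Fintype V] (G : SimpleGraph V) (X : Finset V) : Finset V :=
  univ.filter fun v => ∃ x ∈ X, G.Adj x v

/-- The square `G²` of a graph: vertices at distance `1` or `2` are adjacent. -/
def graphSquare {V : Type*} (G : SimpleGraph V) : SimpleGraph V :=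
  SimpleGraph.fromRel fun u v => G.Adj u v ∨ ∃ w, G.Adj u w ∧ G.Adj w v

/-- `X` is `G²`-connected: the subgraph of `G²` induced on `X` is connected. -/
def GsqConnected {V : Type*} (G : SimpleGraph V) (X : Finset V) : Prop :=
  ((graphSquare G).induce (X : Set V)).Connected

/-- The degree `d` of the torus `ℤ_m^n`. -/
def degT (m n : ℕ) : ℕ := if m = 2 then n else 2 * n

/-- `Y` covers `X`: every vertex of `X` has a neighbour in `Y` and every vertex of `Y`
has a neighbour in `X`. -/
def Covers {V : Type*} (G : SimpleGraph V) (Y X : Finset V) : Prop :=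
  (∀ x ∈ X, ∃ y ∈ Y, G.Adj x y) ∧ ∀ y ∈ Y, ∃ x ∈ X, G.Adj y x

/-!
Let `W ⊆ X` be maximal with pairwise disjoint neighbourhoods. Every `x ∈ X \ W` shares a
neighbour with some point of `W`, so `N(W)` covers `X`; the `|W|` disjoint neighbourhoods, each of
size at least `d`, lie in `N(X)`, so `|W| ≤ g / d`. Since `X` is `G²`-connected, `W` is connected
at distance `6` and therefore lies on one walk of length at most `12 |W|`. Such a set is recorded
by the start of the walk, its moves (`2n + 1` choices each, counting "stay") and the positions
belonging to `W`, giving at most `m^n (2n+1)^{12g/d} 2^{12g/d+1} ≤ 2^{c (g log d / d + d)}`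
containers `N(W)`.
-/

namespace SimpleGraph

variable {V : Type*} {G : SimpleGraph V}

lemma Walk.exists_splice {u v a : V} (p : G.Walk u v) (ha : a ∈ p.support) (c : G.Walk a a) :
    ∃ q : G.Walk u v, q.length = p.length + c.length ∧
      ∀ x, x ∈ q.support ↔ x ∈ p.support ∨ x ∈ c.support := by
  refine ⟨(p.takeUntil a ha).append (c.append (p.dropUntil a ha)), ?_, fun x => ?_⟩
  · conv_rhs => rw [← p.take_spec ha]
    simp only [Walk.length_append]
    ring
  · conv_rhs => rw [← p.take_spec ha]
    simp only [Walk.mem_support_append_iff]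
    tauto

section WalkThrough

variable {W : Type*} {H : SimpleGraph W} {f : W → V} {k : ℕ}

lemma Reachable.exists_walk_detour (hf : ∀ a b, H.Adj a b → ∃ q : G.Walk (f a) (f b), q.length ≤ k)
    {a b : W} (hab : H.Reachable a b) {u v : V} (p : G.Walk u v) (ha : f a ∈ p.support)
    (hb : f b ∉ p.support) :
    ∃ (c : W) (p' : G.Walk u v), p'.length ≤ p.length + 2 * k ∧ f c ∉ p.support ∧
      f c ∈ p'.support ∧ ∀ x ∈ p.support, x ∈ p'.support := by
  obtain ⟨e, -, he, he'⟩ := hab.some.exists_boundary_dart {a | f a ∈ p.support} ha hb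
  obtain ⟨q, hq⟩ := hf _ _ e.adj
  obtain ⟨p', hlen', hsupp'⟩ := p.exists_splice he (q.append q.reverse)
  refine ⟨e.snd, p', ?_, he', ?_, fun x hx => (hsupp' x).2 (.inl hx)⟩
  · rw [hlen', Walk.length_append, Walk.length_reverse]
    omega
  · simp [hsupp']

/-- Growing a closed walk by detours along the edges of `H`, each realised by a `G`-walk of
length at most `k`, visits the image of `f` in `2k(|W| - 1)` steps. -/
lemma Connected.exists_closed_walk_through [Fintype W] (hH : H.Connected)
    (hf : ∀ a b, H.Adj a b → ∃ q : G.Walk (f a) (f b), q.length ≤ k) :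
    ∃ (u : V) (p : G.Walk u u), p.length ≤ 2 * k * (Fintype.card W - 1) ∧
      ∀ a, f a ∈ p.support := by
  have hW : 0 < Fintype.card W := Fintype.card_pos_iff.2 hH.nonempty
  have grow : ∀ j, ∃ (u : V) (p : G.Walk u u), p.length ≤ 2 * k * j ∧
      min (j + 1) (Fintype.card W) ≤ #{a | f a ∈ p.support} := by
    intro j
    induction j with
    | zero =>
      obtain ⟨a⟩ := hH.nonempty
      exact ⟨f a, .nil, by simp, (min_le_left _ _).trans (card_pos.2 ⟨a, by simp⟩)⟩
    | succ j ih =>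
      obtain ⟨u, p, hlen, hcard⟩ := ih
      by_cases hall : ∀ b, f b ∈ p.support
      · refine ⟨u, p, hlen.trans (by gcongr; omega), (min_le_right _ _).trans ?_⟩
        simp [hall]
      obtain ⟨b, hb⟩ := not_forall.1 hall
      obtain ⟨a, ha⟩ : ∃ a, f a ∈ p.support := by
        by_contra! h
        simp [h] at hcard
        omega
      obtain ⟨c, p', hlen', hc, hc', hsupp⟩ := (hH.preconnected a b).exists_walk_detour hf p ha hb
      refine ⟨u, p', by rw [mul_add_one]; omega, ?_⟩
      have hsub : insert c (univ.filter (f · ∈ p.support)) ⊆ univ.filter (f · ∈ p'.support) :=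
        insert_subset (by simpa using hc') fun x hx => by simpa using hsupp _ (by simpa using hx)
      have := card_le_card hsub
      rw [card_insert_of_notMem (by simpa using hc)] at this
      omega
  obtain ⟨u, p, hlen, hcard⟩ := grow (Fintype.card W - 1)
  refine ⟨u, p, hlen, fun a => ?_⟩
  have huniv : univ.filter (f · ∈ p.support) = univ :=
    eq_univ_of_card _ ((card_le_univ _).antisymm (by omega))
  have ha : a ∈ univ.filter (f · ∈ p.support) := by rw [huniv]; exact mem_univ a
  simpa using ha

end WalkThrough

lemma edist_le_two_of_adj_of_adj {u v w : V} (h₁ : G.Adj u v) (h₂ : G.Adj v w) :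
    G.edist u w ≤ 2 :=
  (edist_le (.cons h₁ (.cons h₂ .nil))).trans (by simp)

lemma edist_le_two_of_graphSquare_adj {u v : V} (h : (graphSquare G).Adj u v) :
    G.edist u v ≤ 2 := by
  have key : ∀ {a b : V}, G.Adj a b ∨ (∃ w, G.Adj a w ∧ G.Adj w b) → G.edist a b ≤ 2 := by
    rintro a b (hab | ⟨w, haw, hwb⟩)
    · exact (edist_eq_one_iff_adj.2 hab).trans_le one_le_two
    · exact edist_le_two_of_adj_of_adj haw hwb
  rcases ((fromRel_adj _ _ _).1 h).2 with h | h
  · exact key h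
  · exact edist_comm.trans_le (key h)

lemma exists_walk_length_le_of_edist_le {u v : V} {k : ℕ} (h : G.edist u v ≤ k) :
    ∃ p : G.Walk u v, p.length ≤ k := by
  obtain ⟨p, hp⟩ := exists_walk_of_edist_ne_top (h.trans_lt (ENat.natCast_lt_top k)).ne
  exact ⟨p, by exact_mod_cast hp.trans_le h⟩

lemma Walk.exists_scanl_eq_support {D : Type*} (move : V → D → V)
    (hmove : ∀ x y, G.Adj x y → ∃ d, move x d = y) {u v : V} (p : G.Walk u v) :
    ∃ ds : List D, ds.length = p.length ∧ ds.scanl move u = p.support := by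
  induction p with
  | nil => exact ⟨[], rfl, rfl⟩
  | cons h p ih =>
    obtain ⟨d, hd⟩ := hmove _ _ h
    obtain ⟨ds, hlen, hds⟩ := ih
    exact ⟨d :: ds, by simp [hlen], by rw [List.scanl_cons, hd, hds, Walk.support_cons]⟩

/-- Consecutive points of a `G²`-path in `X` have representatives in `W` at distance `≤ 6`. -/
lemma connected_fromRel_edist_le_six {X W : Finset V} (hX : GsqConnected G X) (hWX : W ⊆ X)
    (hdom : ∀ x ∈ X, ∃ w ∈ W, G.edist x w ≤ 2) (hW : W.Nonempty) :
    (fromRel fun a b : W => G.edist a b ≤ 6).Connected := by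
  set H := fromRel fun a b : W => G.edist a b ≤ 6
  have reach : ∀ a b : W, G.edist a b ≤ 6 → H.Reachable a b := fun a b h => by
    by_cases hab : a = b
    · exact hab ▸ Reachable.refl a
    · exact ((fromRel_adj _ _ _).2 ⟨hab, .inl h⟩).reachable
  choose r hrW hr using hdom
  let ρ : ↥(X : Set V) → W := fun x => ⟨r x.1 x.2, hrW x.1 x.2⟩
  have hρ : ∀ x y, ((graphSquare G).induce (X : Set V)).Adj x y →
      Relation.ReflTransGen H.Adj (ρ x) (ρ y) := fun x y hxy =>
    (reachable_iff_reflTransGen _ _).1 <| reach _ _ <|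
      calc G.edist (ρ x) (ρ y) ≤ G.edist (ρ x) x + G.edist x.1 (ρ y) :=
            SimpleGraph.edist_triangle
        _ ≤ G.edist (ρ x) x + (G.edist x.1 y + G.edist y.1 (ρ y)) := by
            gcongr
            exact SimpleGraph.edist_triangle
        _ ≤ 2 + (2 + 2) := by
            gcongr
            · exact edist_comm.trans_le (hr x.1 x.2)
            · exact edist_le_two_of_graphSquare_adj hxy
            · exact hr y.1 y.2
        _ = 6 := by norm_num
  have hrep : ∀ a : W, H.Reachable a (ρ ⟨a, hWX a.2⟩) := fun a =>
    reach _ _ ((hr a (hWX a.2)).trans (by norm_num))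
  have : Nonempty W := hW.to_subtype
  refine Connected.mk fun a b => ?_
  have hab := (reachable_iff_reflTransGen _ _).1
    (hX.preconnected ⟨a, hWX a.2⟩ ⟨b, hWX b.2⟩)
  exact (hrep a).trans (((reachable_iff_reflTransGen _ _).2
    (Relation.ReflTransGen.lift' ρ hρ _ _ hab)).trans (hrep b).symm)

end SimpleGraph

open SimpleGraph

section FiniteGraph

variable {V : Type*} [Fintype V] {G : SimpleGraph V}

lemma mem_nbhd {X : Finset V} {v : V} : v ∈ nbhd G X ↔ ∃ x ∈ X, G.Adj x v := by
  simp [nbhd]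

lemma exists_maximal_pairwiseDisjoint_neighborFinset (X : Finset V) :
    ∃ W ⊆ X, (W : Set V).PairwiseDisjoint (G.neighborFinset ·) ∧
      ∀ x ∈ X, x ∉ W → ∃ w ∈ W, ¬Disjoint (G.neighborFinset x) (G.neighborFinset w) := by
  obtain ⟨W, hW⟩ := Finset.exists_maximal
    (s := X.powerset.filter fun W : Finset V => (W : Set V).PairwiseDisjoint (G.neighborFinset ·))
    ⟨∅, by simp⟩
  obtain ⟨hWX, hWdisj⟩ := mem_filter.1 hW.prop
  refine ⟨W, mem_powerset.1 hWX, hWdisj, fun x hxX hxW => ?_⟩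
  by_contra! hdisj
  have hins : insert x W ∈ X.powerset.filter
      fun W : Finset V => (W : Set V).PairwiseDisjoint (G.neighborFinset ·) := by
    refine mem_filter.2 ⟨mem_powerset.2 (insert_subset hxX (mem_powerset.1 hWX)), ?_⟩
    rw [coe_insert]
    exact hWdisj.insert fun w hw _ => hdisj w hw
  exact hxW (hW.2 hins (subset_insert x W) (mem_insert_self x W))

lemma card_mul_le_card_nbhd {δ : ℕ} (hδ : ∀ v, δ ≤ G.degree v) {W X : Finset V} (hWX : W ⊆ X)
    (hW : (W : Set V).PairwiseDisjoint (G.neighborFinset ·)) : #W * δ ≤ #(nbhd G X) :=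
  calc #W * δ ≤ ∑ w ∈ W, G.degree w := by
        rw [← smul_eq_mul, ← sum_const]
        exact sum_le_sum fun w _ => hδ w
    _ = #(W.biUnion (G.neighborFinset ·)) := (card_biUnion hW).symm
    _ ≤ #(nbhd G X) := card_le_card fun v hv => by
        obtain ⟨w, hw, hwv⟩ := mem_biUnion.1 hv
        exact mem_nbhd.2 ⟨w, hWX hw, (G.mem_neighborFinset w v).1 hwv⟩

lemma covers_nbhd (hadj : ∀ x, ∃ y, G.Adj x y) {W X : Finset V} (hWX : W ⊆ X)
    (hdom : ∀ x ∈ X, x ∉ W → ∃ w ∈ W, ¬Disjoint (G.neighborFinset x) (G.neighborFinset w)) :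
    Covers G (nbhd G W) X := by
  refine ⟨fun x hx => ?_, fun y hy => ?_⟩
  · by_cases hxW : x ∈ W
    · obtain ⟨y, hy⟩ := hadj x
      exact ⟨y, mem_nbhd.2 ⟨x, hxW, hy⟩, hy⟩
    · obtain ⟨w, hw, hxw⟩ := hdom x hx hxW
      obtain ⟨z, hxz, hwz⟩ := not_disjoint_iff.1 hxw
      exact ⟨z, mem_nbhd.2 ⟨w, hw, (G.mem_neighborFinset w z).1 hwz⟩,
        (G.mem_neighborFinset x z).1 hxz⟩
  · obtain ⟨w, hw, hwy⟩ := mem_nbhd.1 hy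
    exact ⟨w, hWX hw, hwy.symm⟩

end FiniteGraph

section WalkSubsets

variable {V : Type*} [Fintype V] {G : SimpleGraph V}

def walkSubsets (G : SimpleGraph V) (L : ℕ) : Finset (Finset V) :=
  {S | ∃ (u v : V) (p : G.Walk u v), p.length ≤ L ∧ ∀ x ∈ S, x ∈ p.support}

/-- A set on a walk is recorded by the start, the `L` moves (a missing move pads a shorter walk)
and the subset of the `L + 1` visited positions. -/
theorem card_walkSubsets_le {D : Type*} [Fintype D] (move : V → D → V)
    (hmove : ∀ x y, G.Adj x y → ∃ d, move x d = y) (L : ℕ) :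
    #(walkSubsets G L) ≤ Fintype.card V * (Fintype.card D + 1) ^ L * 2 ^ (L + 1) := by
  let step : V → Option D → V := fun x o => o.elim x (move x)
  let trail : V × List.Vector (Option D) L → Finset V := fun uds =>
    (uds.2.toList.scanl step uds.1).toFinset
  have hsub : walkSubsets G L ⊆ univ.biUnion fun uds => (trail uds).powerset := by
    intro S hS
    obtain ⟨u, v, p, hlen, hSp⟩ := (mem_filter.1 hS).2
    obtain ⟨ds, hds, hscan⟩ := p.exists_scanl_eq_support move hmove
    let padded : List.Vector (Option D) L :=
      ⟨ds.map some ++ List.replicate (L - p.length) none, by simp [hds]; omega⟩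
    refine mem_biUnion.2 ⟨(u, padded), mem_univ _, mem_powerset.2 fun x hx => ?_⟩
    have hx' : x ∈ ds.scanl move u := hscan ▸ hSp x hx
    simp only [trail, padded, List.Vector.toList_mk, List.scanl_append, List.scanl_map,
      List.mem_toFinset, List.mem_append]
    exact .inl hx'
  calc #(walkSubsets G L) ≤ ∑ uds : V × List.Vector (Option D) L, #(trail uds).powerset :=
        (card_le_card hsub).trans card_biUnion_le
    _ ≤ ∑ _uds : V × List.Vector (Option D) L, 2 ^ (L + 1) := by
        gcongr with uds
        rw [card_powerset]
        gcongr
        · norm_num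
        · exact (List.toFinset_card_le _).trans (by simp)
    _ = Fintype.card V * (Fintype.card D + 1) ^ L * 2 ^ (L + 1) := by
        simp [card_vector]

end WalkSubsets

theorem exists_mem_walkSubsets_covers {V : Type*} [Fintype V] {G : SimpleGraph V} {δ : ℕ}
    (hδ : ∀ v, δ ≤ G.degree v) (hδ0 : 0 < δ) {X : Finset V} (hX : GsqConnected G X) :
    ∃ W ∈ walkSubsets G (12 * (#(nbhd G X) / δ)), Covers G (nbhd G W) X := by
  obtain ⟨W, hWX, hWdisj, hdom⟩ := exists_maximal_pairwiseDisjoint_neighborFinset (G := G) X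
  have hdom₂ : ∀ x ∈ X, ∃ w ∈ W, G.edist x w ≤ 2 := by
    intro x hx
    by_cases hxW : x ∈ W
    · exact ⟨x, hxW, by simp⟩
    obtain ⟨w, hw, hxw⟩ := hdom x hx hxW
    obtain ⟨z, hxz, hwz⟩ := not_disjoint_iff.1 hxw
    exact ⟨w, hw, edist_le_two_of_adj_of_adj ((G.mem_neighborFinset x z).1 hxz)
      ((G.mem_neighborFinset w z).1 hwz).symm⟩
  have hWne : W.Nonempty := by
    obtain ⟨⟨x, hx⟩⟩ := hX.nonempty
    obtain ⟨w, hw, -⟩ := hdom₂ x hx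
    exact ⟨w, hw⟩
  obtain ⟨u, p, hlen, hsupp⟩ :=
    (connected_fromRel_edist_le_six hX hWX hdom₂ hWne).exists_closed_walk_through
      (G := G) (f := Subtype.val) (k := 6) fun a b hab => by
        obtain ⟨-, h | h⟩ := (fromRel_adj _ _ _).1 hab
        · exact exists_walk_length_le_of_edist_le h
        · exact exists_walk_length_le_of_edist_le (edist_comm.trans_le h)
  have hWcard : #W ≤ #(nbhd G X) / δ :=
    (Nat.le_div_iff_mul_le hδ0).2 (card_mul_le_card_nbhd hδ hWX hWdisj)
  rw [Fintype.card_coe] at hlen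
  refine ⟨W, mem_filter.2 ⟨mem_univ _, u, u, p, by omega, fun x hx => hsupp ⟨x, hx⟩⟩,
    covers_nbhd (fun x => (G.degree_pos_iff_exists_adj x).1 (hδ0.trans_le (hδ x))) hWX hdom⟩

section Torus

variable {m n : ℕ}

lemma le_degT : n ≤ degT m n := by
  unfold degT
  split_ifs <;> omega

lemma eq_two_and_eq_one_or_two_le_degT (hn : 1 ≤ n) : (m = 2 ∧ n = 1) ∨ 2 ≤ degT m n := by
  unfold degT
  split_ifs <;> omega

def torusMove (x : Fin n → ZMod m) (d : Fin n × Bool) : Fin n → ZMod m :=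
  if d.2 then x + Pi.single d.1 1 else x - Pi.single d.1 1

lemma exists_eq_add_single_iff {x y : Fin n → ZMod m} :
    (∃ i, x i = y i + 1 ∧ ∀ j, j ≠ i → x j = y j) ↔ ∃ i, y + Pi.single i 1 = x := by
  refine exists_congr fun i => ⟨fun ⟨hi, hj⟩ => funext fun j => ?_, fun h => ?_⟩
  · by_cases hji : j = i
    · subst hji
      simp [hi]
    · simp [hji, hj j hji]
  · subst h
    exact ⟨by simp, fun j hj => by simp [hj]⟩

lemma torus_adj_iff {x y : Fin n → ZMod m} :
    (torus m n).Adj x y ↔ x ≠ y ∧ ∃ i, y = x + Pi.single i 1 ∨ y = x - Pi.single i 1 := by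
  rw [torus, fromRel_adj, exists_eq_add_single_iff, exists_eq_add_single_iff,
    ← exists_or]
  simp only [eq_sub_iff_add_eq, eq_comm, or_comm]

lemma exists_torusMove_eq {x y : Fin n → ZMod m} (h : (torus m n).Adj x y) :
    ∃ d, torusMove x d = y := by
  obtain ⟨-, i, hy | hy⟩ := torus_adj_iff.1 h
  · exact ⟨(i, true), by simp [torusMove, hy]⟩
  · exact ⟨(i, false), by simp [torusMove, hy]⟩

lemma degT_le_degree [NeZero m] (hm : 2 ≤ m) (x : Fin n → ZMod m) :
    degT m n ≤ (torus m n).degree x := by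
  have : Fact (1 < m) := ⟨hm⟩
  have single_inj : Function.Injective fun i : Fin n => (Pi.single i 1 : Fin n → ZMod m) :=
    fun i j h => by
      by_contra hij
      simpa [Pi.single_apply, hij] using congrFun h i
  let A := univ.image fun i => x + Pi.single i (1 : ZMod m)
  let B := univ.image fun i => x - Pi.single i (1 : ZMod m)
  have hA : #A = n := by
    rw [card_image_of_injective _ fun i j h => single_inj (add_left_cancel h)]
    simp
  have hB : #B = n := by
    rw [card_image_of_injective _ fun i j h => single_inj (sub_right_injective h)]
    simp
  have hAB : #(A ∪ B) ≤ (torus m n).degree x := by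
    refine (card_le_card fun y hy => ?_).trans_eq (card_neighborFinset_eq_degree _ _)
    rw [mem_neighborFinset, torus_adj_iff]
    rcases mem_union.1 hy with hy | hy <;> obtain ⟨i, -, rfl⟩ := mem_image.1 hy
    · exact ⟨fun h => by simpa using congrFun h i, i, .inl rfl⟩
    · refine ⟨fun h => one_ne_zero (α := ZMod m) ?_, i, .inr rfl⟩
      have hi := congrFun h i
      simp only [Pi.sub_apply, Pi.single_eq_same] at hi
      linear_combination hi
  unfold degT
  split_ifs with hm2
  · exact hA.symm.trans_le ((card_le_card subset_union_left).trans hAB)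
  · have htwo : (2 : ZMod m) ≠ 0 := by
      rw [← Nat.cast_ofNat, ne_eq, ZMod.natCast_eq_zero_iff]
      exact fun h => hm2 ((Nat.le_of_dvd two_pos h).antisymm hm)
    have hdisj : Disjoint A B := by
      refine disjoint_left.2 fun y hyA hyB => ?_
      obtain ⟨i, -, rfl⟩ := mem_image.1 hyA
      obtain ⟨j, -, hj⟩ := mem_image.1 hyB
      have hi := congrFun hj i
      by_cases hij : i = j
      · subst hij
        exact htwo (by simp at hi; linear_combination -hi)
      · simp [hij] at hi
    rw [card_union_of_disjoint hdisj, hA, hB] at hAB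
    omega

end Torus

section Counting

variable {m n : ℕ}

lemma card_walkSubsets_torus_le [NeZero m] (L : ℕ) :
    #(walkSubsets (torus m n) L) ≤ m ^ n * (2 * n + 1) ^ L * 2 ^ (L + 1) := by
  simpa [ZMod.card, mul_comm] using
    card_walkSubsets_le (G := torus m n) torusMove (fun _ _ => exists_torusMove_eq) L

lemma pow_mul_pow_mul_two_pow_le {d : ℕ} (L : ℕ) (hd : 2 ≤ d) (hnd : n ≤ d) :
    m ^ n * (2 * n + 1) ^ L * 2 ^ (L + 1) ≤ 2 ^ ((m + 1) * d) * d ^ (4 * L) := by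
  have hm : m ^ n ≤ 2 ^ (m * d) :=
    calc m ^ n ≤ (2 ^ m) ^ n := Nat.pow_le_pow_left Nat.lt_two_pow_self.le n
      _ = 2 ^ (m * n) := (pow_mul _ _ _).symm
      _ ≤ 2 ^ (m * d) := Nat.pow_le_pow_right two_pos (Nat.mul_le_mul_left m hnd)
  have hd4 : (2 * n + 1) * 2 ≤ d ^ 4 :=
    calc (2 * n + 1) * 2 ≤ 2 * 2 * 2 * d := by omega
      _ ≤ d * d * d * d := by gcongr
      _ = d ^ 4 := by ring
  calc m ^ n * (2 * n + 1) ^ L * 2 ^ (L + 1) = m ^ n * ((2 * n + 1) * 2) ^ L * 2 := by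
        rw [mul_pow, pow_succ]
        ring
    _ ≤ 2 ^ (m * d) * (d ^ 4) ^ L * 2 ^ d := by
        gcongr
        exact Nat.le_self_pow (by omega) 2
    _ = 2 ^ ((m + 1) * d) * d ^ (4 * L) := by ring

lemma two_pow_mul_pow_le_rpow {d : ℕ} (g : ℕ) (hd : 2 ≤ d) :
    ((2 ^ ((m + 1) * d) * d ^ (4 * (12 * (g / d))) : ℕ) : ℝ) ≤
      2 ^ ((m + 48 : ℝ) * (g * Real.logb 2 d / d + d)) := by
  have hd0 : (0 : ℝ) < d := by positivity
  have hlg : 0 ≤ Real.logb 2 d := Real.logb_nonneg one_lt_two (by exact_mod_cast (by omega : 1 ≤ d))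
  have hq : ((g / d : ℕ) : ℝ) * Real.logb 2 d ≤ g * Real.logb 2 d / d := by
    rw [mul_div_right_comm]
    exact mul_le_mul_of_nonneg_right Nat.cast_div_le hlg
  have hdpow : (d : ℝ) ^ (4 * (12 * (g / d))) = 2 ^ (Real.logb 2 d * ↑(4 * (12 * (g / d)))) := by
    rw [Real.rpow_mul_natCast zero_le_two, Real.rpow_logb two_pos (by norm_num) hd0]
  push_cast
  rw [← Real.rpow_natCast 2, hdpow, ← Real.rpow_add two_pos]
  refine Real.rpow_le_rpow_of_exponent_le one_le_two ?_
  push_cast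
  have : 0 ≤ (m : ℝ) * (g * Real.logb 2 d / d) := by positivity
  nlinarith

end Counting

lemma card_image_nbhd_walkSubsets_torus_le {m n : ℕ} [NeZero m] (hn : 1 ≤ n) (g : ℕ) :
    (#((walkSubsets (torus m n) (12 * (g / degT m n))).image (nbhd (torus m n))) : ℝ) ≤
      2 ^ ((m + 48 : ℝ) * (g * Real.logb 2 (degT m n) / degT m n + degT m n)) := by
  rcases eq_two_and_eq_one_or_two_le_degT (m := m) hn with ⟨rfl, rfl⟩ | hd
  -- For `d = 1` the bound is a constant, met because the torus has only two vertices.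
  · have hcard := card_le_univ
      ((walkSubsets (torus 2 1) (12 * (g / degT 2 1))).image (nbhd (torus 2 1)))
    rw [Fintype.card_finset, Fintype.card_fun, ZMod.card, Fintype.card_fin] at hcard
    calc _ ≤ ((2 ^ 2 ^ 1 : ℕ) : ℝ) := by exact_mod_cast hcard
      _ ≤ _ := by norm_num [degT]
  · calc _ ≤ (#(walkSubsets (torus m n) (12 * (g / degT m n))) : ℝ) := by
          exact_mod_cast card_image_le
      _ ≤ ((2 ^ ((m + 1) * degT m n) * degT m n ^ (4 * (12 * (g / degT m n))) : ℕ) : ℝ) := by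
          exact_mod_cast (card_walkSubsets_torus_le _).trans (pow_mul_pow_mul_two_pow_le _ hd le_degT)
      _ ≤ _ := two_pow_mul_pow_le_rpow g hd

theorem torus_cover_containers_general (m : ℕ) [NeZero m] (hm2 : 2 ≤ m) :
    ∃ c : ℝ, 0 < c ∧ ∀ n : ℕ, 1 ≤ n → ∀ g : ℕ,
      ∃ 𝒱 : Finset (Finset (Fin n → ZMod m)),
        (𝒱.card : ℝ) ≤
          (2 : ℝ) ^ (c * ((g : ℝ) * Real.logb 2 (degT m n) / (degT m n : ℝ) +
            (degT m n : ℝ))) ∧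
        ∀ X : Finset (Fin n → ZMod m), GsqConnected (torus m n) X →
          (nbhd (torus m n) X).card = g →
          ∃ Y ∈ 𝒱, Covers (torus m n) Y X := by
  refine ⟨m + 48, by positivity, fun n hn g => ⟨_, card_image_nbhd_walkSubsets_torus_le hn g,
    fun X hX hg => ?_⟩⟩
  obtain ⟨W, hW, hcov⟩ :=
    exists_mem_walkSubsets_covers (degT_le_degree hm2) (Nat.lt_of_lt_of_le hn le_degT) hX
  exact ⟨_, mem_image_of_mem _ (hg ▸ hW), hcov⟩

/-- Cover-container lemma: there is a small family `𝒱` of sets such that every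
`G²`-connected `X` with `|N(X)| = g` is covered by some member of `𝒱`. -/
theorem torus_cover_containers (m : ℕ) [NeZero m] (hm : Even m) (hm2 : 2 ≤ m) :
    ∃ c : ℝ, 0 < c ∧ ∀ n : ℕ, 1 ≤ n → ∀ g : ℕ,
      ∃ 𝒱 : Finset (Finset (Fin n → ZMod m)),
        (𝒱.card : ℝ) ≤
          (2 : ℝ) ^ (c * ((g : ℝ) * Real.logb 2 (degT m n) / (degT m n : ℝ) +
            (degT m n : ℝ))) ∧
        ∀ X : Finset (Fin n → ZMod m), GsqConnected (torus m n) X →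
          (nbhd (torus m n) X).card = g →
          ∃ Y ∈ 𝒱, Covers (torus m n) Y X :=
  torus_cover_containers_general m hm2
end
end

section
/- Fix a finite set 𝒮 ⊆ ℕ ∪ {0} and an integer N ≥ 4·max(𝒮) + 1. Then for every n ≥ 1 the reduction map Mod_N, sending f : V(Q_n) → ℤ to the function v ↦ (f(v) mod N) ∈ ℤ_N, is a bijection from Lip(Q_n; 𝒮) onto Hom_𝟎(Q_n, C(N; 𝒮)), the set of graph homomorphisms g from Q_n to the Cayley graph C(N; 𝒮) with g(𝟎) = 0. -/
open Finset Classical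

noncomputable section

/-- The `n`-dimensional hypercube `Q_n`. -/
def cube (n : ℕ) : SimpleGraph (Fin n → ZMod 2) := torus 2 n

/-- Adjacency in the Cayley graph `C(N; 𝒮)` on `ℤ_N`: `u ~ v` iff `u - v ≡ ±x (mod N)`
for some `x ∈ 𝒮` (loops allowed when `0 ∈ 𝒮`). -/
def CayAdj (N : ℕ) (S : Finset ℕ) (u v : ZMod N) : Prop :=
  ∃ x ∈ S, u - v = (x : ZMod N) ∨ v - u = (x : ZMod N)

/-- `f ∈ Lip(Q_n; 𝒮)`: `f(𝟎) = 0` and `|f(u) - f(v)| ∈ 𝒮` across every edge of `Q_n`. -/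
def IsLip (n : ℕ) (S : Finset ℕ) (f : (Fin n → ZMod 2) → ℤ) : Prop :=
  f 0 = 0 ∧ ∀ u v, (cube n).Adj u v → (f u - f v).natAbs ∈ S

/-- `g ∈ Hom_𝟎(Q_n, C(N; 𝒮))`: a graph homomorphism from `Q_n` to the Cayley graph
`C(N; 𝒮)` sending `𝟎` to `0`. -/
def IsHomZero (n N : ℕ) (S : Finset ℕ) (g : (Fin n → ZMod 2) → ZMod N) : Prop :=
  g 0 = 0 ∧ ∀ u v, (cube n).Adj u v → CayAdj N S (g u) (g v)

/-! Reduction mod `N` is injective on `Lip(Q_n; 𝒮)` because a Lipschitz `f` can be recovered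
from `g = f mod N`: each edge difference `f u - f v` has absolute value `≤ max 𝒮 < N / 2`, so it is
the balanced representative (`ZMod.valMinAbs`) of `g u - g v`, and `f v` is the sum of these along
the path from `𝟎` to `v` that switches on the coordinates one at a time.

For surjectivity the same sum lifts any `g ∈ Hom_𝟎(Q_n, C(N; 𝒮))`. The lift is Lipschitz because
the paths to two adjacent vertices are joined by a ladder of 4-cycles, and around a 4-cycle the
balanced lifts of the differences of `g` add up to a multiple of `N` of absolute value
`≤ 4 · max 𝒮 < N`, hence to `0`. -/

theorem ZMod.valMinAbs_intCast_of_two_mul_natAbs_lt {N : ℕ} {a : ℤ} (h : 2 * a.natAbs < N) :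
    (a : ZMod N).valMinAbs = a := by
  have : NeZero N := ⟨by omega⟩
  rw [ZMod.valMinAbs_spec]
  exact ⟨rfl, by omega, by omega⟩

theorem ZMod.valMinAbs_sub_add_valMinAbs_sub {N : ℕ} {a b c : ZMod N}
    (h : 2 * ((a - b).valMinAbs.natAbs + (b - c).valMinAbs.natAbs) < N) :
    (a - b).valMinAbs + (b - c).valMinAbs = (a - c).valMinAbs := by
  have hcast : (((a - b).valMinAbs + (b - c).valMinAbs : ℤ) : ZMod N) = a - c := by
    push_cast [ZMod.coe_valMinAbs]; ring
  rw [← hcast, ZMod.valMinAbs_intCast_of_two_mul_natAbs_lt (by omega)]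

theorem cayAdj_intCast_of_natAbs_sub_mem {N : ℕ} {S : Finset ℕ} {a b : ℤ}
    (h : (a - b).natAbs ∈ S) : CayAdj N S a b := by
  refine ⟨_, h, ?_⟩
  rcases Int.natAbs_eq (a - b) with he | he
  · left; rw [← Int.cast_sub, he]; simp
  · right; rw [← neg_sub, ← Int.cast_sub, he]; simp

theorem CayAdj.natAbs_valMinAbs_sub_mem {N : ℕ} {S : Finset ℕ} {a b : ZMod N}
    (hN : 2 * S.sup id < N) (h : CayAdj N S a b) : (a - b).valMinAbs.natAbs ∈ S := by
  obtain ⟨x, hx, hxy⟩ := h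
  have hxN : x ≤ N / 2 := by
    have hxS : x ≤ S.sup id := Finset.le_sup (f := id) hx
    omega
  rcases hxy with hab | hba
  · rw [hab, ZMod.valMinAbs_natCast_of_le_half hxN]
    simpa using hx
  · rw [← neg_sub, hba, ZMod.natAbs_valMinAbs_neg, ZMod.valMinAbs_natCast_of_le_half hxN]
    simpa using hx

section CayleyHom

variable {V : Type*} {G : SimpleGraph V} {N : ℕ} {S : Finset ℕ} {g : V → ZMod N}

theorem natAbs_valMinAbs_sub_le_of_reflGen (hN : 2 * S.sup id < N)
    (hg : ∀ u v, G.Adj u v → CayAdj N S (g u) (g v)) {u v : V}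
    (h : Relation.ReflGen G.Adj u v) : (g u - g v).valMinAbs.natAbs ≤ S.sup id := by
  cases h with
  | refl => simp
  | single h => exact Finset.le_sup (f := id) ((hg _ _ h).natAbs_valMinAbs_sub_mem hN)

theorem valMinAbs_sub_add_valMinAbs_sub_of_reflGen (hN : 4 * S.sup id < N)
    (hg : ∀ u v, G.Adj u v → CayAdj N S (g u) (g v)) {u v w : V}
    (huv : Relation.ReflGen G.Adj u v) (hvw : Relation.ReflGen G.Adj v w) :
    (g u - g v).valMinAbs + (g v - g w).valMinAbs = (g u - g w).valMinAbs := by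
  have huv' := natAbs_valMinAbs_sub_le_of_reflGen (by omega) hg huv
  have hvw' := natAbs_valMinAbs_sub_le_of_reflGen (by omega) hg hvw
  exact ZMod.valMinAbs_sub_add_valMinAbs_sub (by omega)

end CayleyHom

theorem cube_adj_iff {n : ℕ} {u v : Fin n → ZMod 2} :
    (cube n).Adj u v ↔ ∃ i, u i ≠ v i ∧ ∀ j ≠ i, u j = v j := by
  have hflip : ∀ a b : ZMod 2, a = b + 1 ↔ a ≠ b := by decide
  simp only [cube, torus, SimpleGraph.fromRel_adj, hflip]
  constructor
  · rintro ⟨-, ⟨i, hi, hj⟩ | ⟨i, hi, hj⟩⟩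
    · exact ⟨i, hi, hj⟩
    · exact ⟨i, Ne.symm hi, fun j hji => (hj j hji).symm⟩
  · rintro ⟨i, hi, hj⟩
    exact ⟨fun h => hi (congrFun h i), Or.inl ⟨i, hi, hj⟩⟩

theorem reflGen_cube_adj_of_forall_ne_eq {n : ℕ} {u v : Fin n → ZMod 2} (i : Fin n)
    (h : ∀ j ≠ i, u j = v j) : Relation.ReflGen (cube n).Adj u v := by
  by_cases hi : u i = v i
  · obtain rfl : u = v := funext fun j => if hj : j = i then hj ▸ hi else h j hj
    exact .refl
  · exact .single (cube_adj_iff.2 ⟨i, hi, h⟩)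

namespace Cube

variable {n : ℕ}

def truncate (v : Fin n → ZMod 2) (k : ℕ) : Fin n → ZMod 2 :=
  fun j => if (j : ℕ) < k then v j else 0

@[simp] theorem truncate_zero (v : Fin n → ZMod 2) : truncate v 0 = 0 := by
  funext j; simp [truncate]

@[simp] theorem zero_truncate (k : ℕ) : truncate (0 : Fin n → ZMod 2) k = 0 := by
  funext j; simp [truncate]

theorem truncate_of_le (v : Fin n → ZMod 2) {k : ℕ} (hk : n ≤ k) : truncate v k = v := by
  funext j; simp [truncate, j.isLt.trans_le hk]

theorem reflGen_truncate_succ (v : Fin n → ZMod 2) {k : ℕ} (hk : k < n) :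
    Relation.ReflGen (cube n).Adj (truncate v (k + 1)) (truncate v k) := by
  refine reflGen_cube_adj_of_forall_ne_eq ⟨k, hk⟩ fun j hj => ?_
  have : (j : ℕ) ≠ k := fun h => hj (Fin.ext h)
  simp only [truncate]
  split_ifs <;> first | rfl | omega

theorem reflGen_truncate_of_adj {u v : Fin n → ZMod 2} (h : (cube n).Adj u v) (k : ℕ) :
    Relation.ReflGen (cube n).Adj (truncate u k) (truncate v k) := by
  obtain ⟨i, -, hi⟩ := cube_adj_iff.1 h
  refine reflGen_cube_adj_of_forall_ne_eq i fun j hj => ?_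
  simp only [truncate, hi j hj]

theorem sub_eq_sum_truncate {A : Type*} [AddCommGroup A] (φ : (Fin n → ZMod 2) → A)
    (v : Fin n → ZMod 2) :
    φ v - φ 0 = ∑ k ∈ range n, (φ (truncate v (k + 1)) - φ (truncate v k)) := by
  rw [Finset.sum_range_sub (fun k => φ (truncate v k)), truncate_of_le v le_rfl, truncate_zero]

variable {N : ℕ} {S : Finset ℕ}

def pathLift (g : (Fin n → ZMod 2) → ZMod N) (v : Fin n → ZMod 2) : ℤ :=
  ∑ k ∈ range n, (g (truncate v (k + 1)) - g (truncate v k)).valMinAbs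

@[simp] theorem pathLift_zero (g : (Fin n → ZMod 2) → ZMod N) : pathLift g 0 = 0 := by
  simp [pathLift]

theorem intCast_pathLift {g : (Fin n → ZMod 2) → ZMod N} (hg0 : g 0 = 0) (v : Fin n → ZMod 2) :
    (pathLift g v : ZMod N) = g v := by
  rw [pathLift]
  push_cast [ZMod.coe_valMinAbs]
  rw [← sub_eq_sum_truncate, hg0, sub_zero]

theorem pathLift_sub_of_adj (hN : 4 * S.sup id < N) {g : (Fin n → ZMod 2) → ZMod N}
    (hg : ∀ u v, (cube n).Adj u v → CayAdj N S (g u) (g v)) {u v : Fin n → ZMod 2}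
    (h : (cube n).Adj u v) : pathLift g u - pathLift g v = (g u - g v).valMinAbs := by
  set D : (Fin n → ZMod 2) → (Fin n → ZMod 2) → ℤ := fun a b => (g a - g b).valMinAbs
  have rung : ∀ k ∈ range n,
      D (truncate u (k + 1)) (truncate u k) - D (truncate v (k + 1)) (truncate v k) =
        D (truncate u (k + 1)) (truncate v (k + 1)) - D (truncate u k) (truncate v k) := by
    intro k hk
    have hk := mem_range.1 hk
    have hu := valMinAbs_sub_add_valMinAbs_sub_of_reflGen hN hg (reflGen_truncate_succ u hk)
      (reflGen_truncate_of_adj h k)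
    have hv := valMinAbs_sub_add_valMinAbs_sub_of_reflGen hN hg
      (reflGen_truncate_of_adj h (k + 1)) (reflGen_truncate_succ v hk)
    linarith
  rw [pathLift, pathLift, ← sum_sub_distrib, sum_congr rfl rung,
    sum_range_sub (fun k => D (truncate u k) (truncate v k)), truncate_of_le u le_rfl,
    truncate_of_le v le_rfl, truncate_zero, truncate_zero]
  simp [D]

theorem eq_pathLift {f : (Fin n → ZMod 2) → ℤ} {g : (Fin n → ZMod 2) → ZMod N} (hf0 : f 0 = 0)
    (hf : ∀ u v, (cube n).Adj u v → f u - f v = (g u - g v).valMinAbs) : f = pathLift g := by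
  funext v
  have hsum := sub_eq_sum_truncate f v
  rw [hf0, sub_zero] at hsum
  rw [hsum, pathLift]
  refine sum_congr rfl fun k hk => ?_
  rcases (Relation.reflGen_iff _ _ _).1 (reflGen_truncate_succ v (mem_range.1 hk)) with h | h
  · simp [h]
  · exact hf _ _ h

end Cube

theorem IsLip.sub_eq_valMinAbs {n N : ℕ} {S : Finset ℕ} {f : (Fin n → ZMod 2) → ℤ}
    (hN : 2 * S.sup id < N) (hf : IsLip n S f) {u v : Fin n → ZMod 2} (h : (cube n).Adj u v) :
    f u - f v = ((f u : ZMod N) - f v).valMinAbs := by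
  have hbound : (f u - f v).natAbs ≤ S.sup id := Finset.le_sup (f := id) (hf.2 u v h)
  rw [← Int.cast_sub, ZMod.valMinAbs_intCast_of_two_mul_natAbs_lt (by omega)]

open Cube in
theorem lip_equiv_homZero_general (S : Finset ℕ) (N : ℕ) (hN : 4 * S.sup id + 1 ≤ N) (n : ℕ) :
    Set.BijOn
      (fun (f : (Fin n → ZMod 2) → ℤ) (v : Fin n → ZMod 2) => ((f v : ℤ) : ZMod N))
      {f | IsLip n S f} {g | IsHomZero n N S g} := by
  have hN2 : 2 * S.sup id < N := by omega
  have eq_pathLift_of_isLip : ∀ f, IsLip n S f → f = pathLift fun v => (f v : ZMod N) :=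
    fun f hf => eq_pathLift hf.1 fun u v h => hf.sub_eq_valMinAbs hN2 h
  refine ⟨fun f hf => ?_, fun f hf f' hf' hff' => ?_, fun g hg => ?_⟩
  · exact ⟨by simp [hf.1], fun u v h => cayAdj_intCast_of_natAbs_sub_mem (hf.2 u v h)⟩
  · rw [eq_pathLift_of_isLip f hf, eq_pathLift_of_isLip f' hf']
    exact congrArg pathLift hff'
  · refine ⟨pathLift g, ⟨pathLift_zero g, fun u v h => ?_⟩, funext (intCast_pathLift hg.1)⟩
    rw [pathLift_sub_of_adj (by omega) hg.2 h]
    exact (hg.2 u v h).natAbs_valMinAbs_sub_mem hN2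

/-- For `N ≥ 4·max 𝒮 + 1`, reduction mod `N` is a bijection from `Lip(Q_n; 𝒮)` onto
`Hom_𝟎(Q_n, C(N; 𝒮))`. -/
theorem lip_equiv_homZero (S : Finset ℕ) (N : ℕ) (hN : 4 * S.sup id + 1 ≤ N)
    (n : ℕ) (hn : 1 ≤ n) :
    Set.BijOn
      (fun (f : (Fin n → ZMod 2) → ℤ) (v : Fin n → ZMod 2) => ((f v : ℤ) : ZMod N))
      {f | IsLip n S f} {g | IsHomZero n N S g} :=
  lip_equiv_homZero_general S N hN n
end
end
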